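/- Let G be a finite connected simple graph and w an injective real-valued edge weight function. For every λ ∈ ℝ, the number of edges of the minimal spanning tree MST(G,w) with weight strictly greater than λ equals the number of λ-clusters of G minus one. -/

import Mathlib

/-!
Cycle property: if `T` is a minimal spanning tree and `s(a, b)` is an edge of `G`, every edge on the
path from `a` to `b` in `T` weighs at most `w s(a, b)`, since exchanging it for `s(a, b)` gives
another spanning tree. So `T` and `G` keep the same reachability once the edges of weight `> λ` are
deleted, and thus have the same number `c` of `λ`-clusters. Deleting those `k` edges from the
tree `T` leaves a forest with `n - 1 - k` edges on `n` vertices; a forest with `m` edges has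
`n - m` components, so `c = k + 1`.
-/

open scoped BigOperators symmDiff

variable {V : Type*}

/-- The total weight of (the edges of) a graph `T`, for a weight function `w` on `Sym2 V`. -/
noncomputable def edgeWeight (w : Sym2 V → ℝ) (T : SimpleGraph V) : ℝ :=
  ∑ᶠ e ∈ T.edgeSet, w e

/-- `T` is a spanning tree of `G`: a subgraph of `G` (on the same, full vertex set)
that is connected and acyclic. -/
def IsSpanningTree (G T : SimpleGraph V) : Prop := T ≤ G ∧ T.IsTree

/-- `T` is a minimal spanning tree of `G` with respect to the weights `w`. -/
def IsMST (G : SimpleGraph V) (w : Sym2 V → ℝ) (T : SimpleGraph V) : Prop :=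
  IsSpanningTree G T ∧
    ∀ T' : SimpleGraph V, IsSpanningTree G T' → edgeWeight w T ≤ edgeWeight w T'

namespace SimpleGraph

variable {G H K : SimpleGraph V} {u v x y : V}

lemma Reachable.of_forall_adj (h : ∀ ⦃a b⦄, H.Adj a b → K.Reachable a b)
    (hxy : H.Reachable x y) : K.Reachable x y := by
  obtain ⟨p⟩ := hxy
  induction p with
  | nil => rfl
  | cons hadj _ ih => exact (h hadj).trans ih

lemma reachable_sup_edge (H : SimpleGraph V) (u v : V) : (H ⊔ edge u v).Reachable u v := by
  rcases eq_or_ne u v with rfl | hne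
  · rfl
  · exact Adj.reachable (.inr ((edge_adj ..).mpr ⟨.inl ⟨rfl, rfl⟩, hne⟩))

lemma Reachable.of_sup_edge (h : (H ⊔ edge u v).Reachable x y) (hle : H ≤ K)
    (huv : K.Reachable u v) : K.Reachable x y :=
  h.of_forall_adj fun a b hab ↦ by
    rcases hab with hab | hab
    · exact (hle hab).reachable
    · obtain ⟨⟨rfl, rfl⟩ | ⟨rfl, rfl⟩, -⟩ := (edge_adj ..).mp hab
      exacts [huv, huv.symm]

lemma reachable_sup_edge_iff :
    (H ⊔ edge u v).Reachable x y ↔ H.Reachable x y ∨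
      (H.Reachable x u ∧ H.Reachable v y) ∨ (H.Reachable x v ∧ H.Reachable u y) := by
  constructor
  · rintro ⟨p⟩
    induction p with
    | nil => exact .inl .rfl
    | @cons a b c hadj _ ih =>
      rcases hadj with hadj | hadj
      · have hab := hadj.reachable
        rcases ih with h | ⟨h₁, h₂⟩ | ⟨h₁, h₂⟩
        exacts [.inl (hab.trans h), .inr (.inl ⟨hab.trans h₁, h₂⟩),
          .inr (.inr ⟨hab.trans h₁, h₂⟩)]
      · obtain ⟨⟨rfl, rfl⟩ | ⟨rfl, rfl⟩, -⟩ := (edge_adj _ _ _ _).mp hadj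
        · rcases ih with h | ⟨h₁, h₂⟩ | ⟨h₁, h₂⟩
          exacts [.inr (.inl ⟨.rfl, h⟩), .inr (.inl ⟨.rfl, h₂⟩), .inl h₂]
        · rcases ih with h | ⟨h₁, h₂⟩ | ⟨h₁, h₂⟩
          exacts [.inr (.inr ⟨.rfl, h⟩), .inl h₂, .inr (.inr ⟨.rfl, h₂⟩)]
  · have hle : H ≤ H ⊔ edge u v := le_sup_left
    have huv := reachable_sup_edge H u v
    rintro (h | ⟨h₁, h₂⟩ | ⟨h₁, h₂⟩)
    · exact h.mono hle
    · exact ((h₁.mono hle).trans huv).trans (h₂.mono hle)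
    · exact ((h₁.mono hle).trans huv.symm).trans (h₂.mono hle)

lemma deleteEdges_sup_edge (h : G.Adj u v) : G.deleteEdges {s(u, v)} ⊔ edge u v = G := by
  ext a b
  simp only [sup_adj, deleteEdges_adj, edge_adj, Set.mem_singleton_iff, Sym2.eq_iff]
  grind [Adj.ne, adj_symm]

lemma card_connectedComponent_eq_of_reachable_eq (h : H.Reachable = K.Reachable) :
    Nat.card H.ConnectedComponent = Nat.card K.ConnectedComponent := by
  unfold ConnectedComponent
  rw [h]

lemma card_connectedComponent_sup_edge_add_one [Finite V] (huv : ¬H.Reachable u v) :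
    Nat.card (H ⊔ edge u v).ConnectedComponent + 1 = Nat.card H.ConnectedComponent := by
  have hle : H ≤ H ⊔ edge u v := le_sup_left
  set φ := ConnectedComponent.map (Hom.ofLE hle)
  have hinj : Set.InjOn φ {H.connectedComponentMk v}ᶜ := by
    intro c hc d hd hcd
    induction c using ConnectedComponent.ind with | h x =>
    induction d using ConnectedComponent.ind with | h y =>
    simp only [Set.mem_compl_iff, Set.mem_singleton_iff, ConnectedComponent.eq] at hc hd
    simp only [φ, ConnectedComponent.map_mk, Hom.ofLE_apply, ConnectedComponent.eq,
      reachable_sup_edge_iff] at hcd ⊢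
    rcases hcd with h | ⟨-, h⟩ | ⟨h, -⟩
    exacts [h, absurd h.symm hd, absurd h hc]
  have hsurj : φ '' {H.connectedComponentMk v}ᶜ = Set.univ := by
    refine Set.eq_univ_of_forall (ConnectedComponent.ind fun x ↦ ?_)
    by_cases hxv : H.Reachable x v
    · exact ⟨H.connectedComponentMk u, by simpa using huv,
        ConnectedComponent.sound ((reachable_sup_edge H u v).trans (hxv.symm.mono hle))⟩
    · exact ⟨H.connectedComponentMk x, by simpa using hxv, rfl⟩
  rw [← Set.ncard_univ, ← hsurj, hinj.ncard_image, ← Set.ncard_singleton (H.connectedComponentMk v),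
    Set.ncard_compl_add_ncard]

lemma card_connectedComponent_bot : Nat.card (⊥ : SimpleGraph V).ConnectedComponent = Nat.card V :=
  (Nat.card_eq_of_bijective _ ⟨fun _ _ h ↦ reachable_bot.mp (ConnectedComponent.exact h),
    ConnectedComponent.ind fun x ↦ ⟨x, rfl⟩⟩).symm

lemma Connected.card_connectedComponent (hG : G.Connected) : Nat.card G.ConnectedComponent = 1 :=
  have := hG.nonempty
  Nat.card_eq_one_iff_unique.mpr ⟨hG.preconnected.subsingleton_connectedComponent, inferInstance⟩

theorem IsAcyclic.ncard_edgeSet_add_card_connectedComponent [Finite V] (hG : G.IsAcyclic) :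
    G.edgeSet.ncard + Nat.card G.ConnectedComponent = Nat.card V := by
  induction h : G.edgeSet.ncard generalizing G with
  | zero =>
    obtain rfl : G = ⊥ := edgeSet_eq_empty.mp ((Set.ncard_eq_zero).mp h)
    simp [card_connectedComponent_bot]
  | succ n ih =>
    obtain ⟨e, he⟩ := Set.nonempty_of_ncard_ne_zero (by omega : G.edgeSet.ncard ≠ 0)
    induction e using Sym2.ind with | h u v =>
    have hbridge : ¬(G.deleteEdges {s(u, v)}).Reachable u v :=
      isBridge_iff.mp (isAcyclic_iff_forall_isBridge.mp hG he)
    have hcard : (G.deleteEdges {s(u, v)}).edgeSet.ncard = n := by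
      rw [edgeSet_deleteEdges, Set.ncard_sdiff_singleton_of_mem he, h, Nat.add_sub_cancel]
    have hsplit := card_connectedComponent_sup_edge_add_one hbridge
    rw [deleteEdges_sup_edge he] at hsplit
    have := ih (hG.anti (deleteEdges_le _)) hcard
    omega

theorem IsTree.ncard_edgeSet_add_one [Finite V] (hG : G.IsTree) :
    G.edgeSet.ncard + 1 = Nat.card V := by
  simpa [hG.connected.card_connectedComponent] using
    hG.isAcyclic.ncard_edgeSet_add_card_connectedComponent

theorem IsTree.not_reachable_deleteEdges_of_mem_edges (hG : G.IsTree) {a b c d : V}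
    {p : G.Walk a b} (hp : p.IsPath) (he : s(c, d) ∈ p.edges) :
    ¬(G.deleteEdges {s(c, d)}).Reachable a b := by
  classical
  rw [reachable_deleteEdges_iff_exists_walk]
  rintro ⟨q, hq⟩
  have hqp : q.toPath = ⟨p, hp⟩ := (hG.isAcyclic.subsingleton_path a b).elim _ _
  exact hq (q.edges_toPath_subset_edges (by rwa [hqp]))

theorem IsTree.isTree_deleteEdges_sup_edge (hG : G.IsTree) {a b c d : V} {p : G.Walk a b}
    (hp : p.IsPath) (he : s(c, d) ∈ p.edges) :
    (G.deleteEdges {s(c, d)} ⊔ edge a b).IsTree := by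
  set G₀ := G.deleteEdges {s(c, d)}
  have hcd : G = G₀ ⊔ edge c d := (deleteEdges_sup_edge (p.adj_of_mem_edges he)).symm
  have hsep : ¬G₀.Reachable a b := hG.not_reachable_deleteEdges_of_mem_edges hp he
  have hcd_reach : (G₀ ⊔ edge a b).Reachable c d := by
    have hab : (G₀ ⊔ edge c d).Reachable a b := hcd ▸ p.reachable
    have hle : G₀ ≤ G₀ ⊔ edge a b := le_sup_left
    have hab' := reachable_sup_edge G₀ a b
    rcases reachable_sup_edge_iff.mp hab with h | ⟨h₁, h₂⟩ | ⟨h₁, h₂⟩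
    · exact absurd h hsep
    · exact (h₁.symm.mono hle).trans (hab'.trans (h₂.symm.mono hle))
    · exact (h₂.mono hle).trans (hab'.symm.trans (h₁.mono hle))
  refine ⟨{ preconnected x y := ?_, nonempty := hG.connected.nonempty },
    (hG.isAcyclic.anti (deleteEdges_le _)).sup_edge_of_not_reachable hsep⟩
  have hxy : (G₀ ⊔ edge c d).Reachable x y := hcd ▸ hG.connected x y
  exact hxy.of_sup_edge le_sup_left hcd_reach

end SimpleGraph

open SimpleGraph

lemma edgeWeight_sup_edge [Finite V] (w : Sym2 V → ℝ) {H : SimpleGraph V} {a b : V} (hab : a ≠ b)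
    (hn : ¬H.Adj a b) : edgeWeight w (H ⊔ edge a b) = edgeWeight w H + w s(a, b) := by
  rw [edgeWeight, edgeSet_sup, edgeSet_edge_of_ne hab,
    finsum_mem_union (by simpa using hn) (Set.toFinite _) (Set.toFinite _), finsum_mem_singleton,
    edgeWeight]

section MST

variable {G T : SimpleGraph V} {w : Sym2 V → ℝ}

theorem IsMST.weight_le_of_mem_edges [Finite V] (hT : IsMST G w T) {a b : V} (hab : G.Adj a b)
    {p : T.Walk a b} (hp : p.IsPath) {e : Sym2 V} (he : e ∈ p.edges) : w e ≤ w s(a, b) := by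
  obtain ⟨⟨hTG, hTtree⟩, hmin⟩ := hT
  induction e using Sym2.ind with | h c d =>
  have hcd : T.Adj c d := p.adj_of_mem_edges he
  have hsep := hTtree.not_reachable_deleteEdges_of_mem_edges hp he
  have hle := hmin _ ⟨sup_le ((deleteEdges_le _).trans hTG) ((edge_le_iff _).mpr (.inr hab)),
    hTtree.isTree_deleteEdges_sup_edge hp he⟩
  have hwT : edgeWeight w T = edgeWeight w (T.deleteEdges {s(c, d)}) + w s(c, d) := by
    conv_lhs => rw [← deleteEdges_sup_edge hcd]
    exact edgeWeight_sup_edge w hcd.ne (by simp)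
  rw [hwT, edgeWeight_sup_edge w hab.ne fun h ↦ hsep h.reachable] at hle
  linarith

theorem IsMST.reachable_deleteEdges_eq [Finite V] (hT : IsMST G w T) (lam : ℝ) :
    (T.deleteEdges {e | lam < w e}).Reachable = (G.deleteEdges {e | lam < w e}).Reachable := by
  ext x y
  refine ⟨fun h ↦ h.mono (deleteEdges_mono hT.1.1), Reachable.of_forall_adj fun a b hab ↦ ?_⟩
  rw [deleteEdges_adj, Set.mem_ofPred_eq, not_lt] at hab
  obtain ⟨p, hp⟩ := hT.1.2.connected.exists_isPath a b
  exact ⟨p.toDeleteEdges _ fun e he ↦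
    not_lt.mpr ((hT.weight_le_of_mem_edges hab.1 hp he).trans hab.2)⟩

end MST

theorem mst_card_edges_above_level_general [Fintype V] (G : SimpleGraph V)
    (w : Sym2 V → ℝ)
    (T : SimpleGraph V) (hT : IsMST G w T) (lam : ℝ) :
    {e | e ∈ T.edgeSet ∧ lam < w e}.ncard =
      Nat.card (SimpleGraph.fromEdgeSet {e | e ∈ G.edgeSet ∧ w e ≤ lam}).ConnectedComponent
        - 1 := by
  have hlow : fromEdgeSet {e | e ∈ G.edgeSet ∧ w e ≤ lam} = G.deleteEdges {e | lam < w e} := by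
    ext a b
    simp only [fromEdgeSet_adj, deleteEdges_adj, Set.mem_ofPred_eq, mem_edgeSet, not_lt]
    exact ⟨fun ⟨⟨h, hw⟩, _⟩ ↦ ⟨h, hw⟩, fun ⟨h, hw⟩ ↦ ⟨⟨h, hw⟩, h.ne⟩⟩
  rw [hlow, ← card_connectedComponent_eq_of_reachable_eq (hT.reachable_deleteEdges_eq lam)]
  have hTtree := hT.1.2
  have hforest := (hTtree.isAcyclic.anti (deleteEdges_le {e | lam < w e}))
    |>.ncard_edgeSet_add_card_connectedComponent
  rw [edgeSet_deleteEdges] at hforest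
  have htree := hTtree.ncard_edgeSet_add_one
  have hsplit := Set.ncard_inter_add_ncard_sdiff_eq_ncard T.edgeSet {e | lam < w e}
  change (T.edgeSet ∩ {e | lam < w e}).ncard = _
  omega

/-- the number of MST edges of weight `> λ` equals the number of
λ-clusters of `G` minus one. -/
theorem mst_card_edges_above_level [Fintype V] (G : SimpleGraph V) (hG : G.Connected)
    (w : Sym2 V → ℝ) (hw : Set.InjOn w G.edgeSet)
    (T : SimpleGraph V) (hT : IsMST G w T) (lam : ℝ) :
    {e | e ∈ T.edgeSet ∧ lam < w e}.ncard =
      Nat.card (SimpleGraph.fromEdgeSet {e | e ∈ G.edgeSet ∧ w e ≤ lam}).ConnectedComponent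
        - 1 :=
  mst_card_edges_above_level_general G w T hT lam
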